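/- arXiv:math/0610624 — 4 statements merged into one kernel-verified Lean document; each statement's English description precedes it below -/
import Mathlib

section
/- Let α, β > -1/2 and define W(n;x) = (1-x+n^{-2})^{α+1/2}(1+x+n^{-2})^{β+1/2} and d(x,y) = |arccos x - arccos y| for x,y ∈ [-1,1]. Then there exists a constant c > 0 depending only on α and β such that for all x, y ∈ [-1,1] and all integers n ≥ 1, W(n;x) ≤ c · W(n;y) · (1 + n·d(x,y))^{2·max{α,β}+1}. -/
open Real

/-- The companion quantity `W(n;x) = (1-x+n⁻²)^(α+1/2) (1+x+n⁻²)^(β+1/2)`. -/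
noncomputable def jacobiW (α β : ℝ) (n : ℕ) (x : ℝ) : ℝ :=
  (1 - x + ((n : ℝ))⁻¹ ^ 2) ^ (α + 1/2) * (1 + x + ((n : ℝ))⁻¹ ^ 2) ^ (β + 1/2)

lemma sin_lip' (u v : ℝ) : |Real.sin u - Real.sin v| ≤ |u - v| := by
  have h1 := Real.abs_sin_le_abs (x := (u - v)/2)
  have h2 := Real.abs_cos_le_one ((u + v)/2)
  have h3 : |(u - v)/2| = |u - v|/2 := by rw [abs_div]; norm_num
  rw [Real.sin_sub_sin, abs_mul, abs_mul, abs_two]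
  have h4 : (0:ℝ) ≤ |Real.sin ((u - v)/2)| := abs_nonneg _
  nlinarith [abs_nonneg (u - v)]

set_option maxHeartbeats 1600000 in
/-- Key quadratic estimate for the factor `1 - x + n⁻²`. -/
lemma key_est (x : ℝ) (hx : x ∈ Set.Icc (-1:ℝ) 1) (y : ℝ) (hy : y ∈ Set.Icc (-1:ℝ) 1)
    (n : ℕ) (hn : 1 ≤ n) :
    1 - x + ((n : ℝ))⁻¹ ^ 2 ≤
      3 * (1 - y + ((n : ℝ))⁻¹ ^ 2) *
        (1 + (n : ℝ) * |Real.arccos x - Real.arccos y|) ^ 2 := by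
  obtain ⟨hx1, hx2⟩ := hx
  obtain ⟨hy1, hy2⟩ := hy
  set θ := Real.arccos x with hθ
  set φ := Real.arccos y with hφ
  set a := Real.sin (θ/2) with ha
  set b := Real.sin (φ/2) with hb
  have hθ0 : 0 ≤ θ := Real.arccos_nonneg x
  have hθπ : θ ≤ π := Real.arccos_le_pi x
  have hφ0 : 0 ≤ φ := Real.arccos_nonneg y
  have hφπ : φ ≤ π := Real.arccos_le_pi y
  have ha0 : 0 ≤ a := Real.sin_nonneg_of_nonneg_of_le_pi (by linarith)
    (by linarith [Real.pi_pos])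
  have hb0 : 0 ≤ b := Real.sin_nonneg_of_nonneg_of_le_pi (by linarith)
    (by linarith [Real.pi_pos])
  have hcx : Real.cos θ = x := Real.cos_arccos hx1 hx2
  have hcy : Real.cos φ = y := Real.cos_arccos hy1 hy2
  -- half angle: 1 - cos θ = 2 sin(θ/2)²
  have h1x : 1 - x = 2 * a ^ 2 := by
    have h := Real.sin_sq_add_cos_sq (θ/2)
    have h2 := Real.cos_sq (θ/2)
    rw [show 2 * (θ/2) = θ by ring, hcx] at h2
    nlinarith
  have h1y : 1 - y = 2 * b ^ 2 := by
    have h := Real.sin_sq_add_cos_sq (φ/2)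
    have h2 := Real.cos_sq (φ/2)
    rw [show 2 * (φ/2) = φ by ring, hcy] at h2
    nlinarith
  set d := |θ - φ| with hd
  have hd0 : 0 ≤ d := abs_nonneg _
  have hab : a - b ≤ d / 2 := by
    have := sin_lip' (θ/2) (φ/2)
    have h3 : |θ/2 - φ/2| = |θ - φ|/2 := by
      rw [show θ/2 - φ/2 = (θ - φ)/2 by ring, abs_div]; norm_num
    calc a - b ≤ |a - b| := le_abs_self _
      _ ≤ |θ/2 - φ/2| := this
      _ = d / 2 := h3
  set s := ((n : ℝ))⁻¹ ^ 2 with hs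
  have hn1 : (1:ℝ) ≤ (n:ℝ) := by exact_mod_cast hn
  have hn0 : (0:ℝ) < (n:ℝ) := by linarith
  have hs0 : 0 < s := by positivity
  have hsn : s * (n:ℝ) ^ 2 = 1 := by
    rw [hs, inv_pow, inv_mul_cancel₀ (by positivity)]
  have hgoal : 2 * a ^ 2 + s ≤ 3 * (2 * b ^ 2 + s) * (1 + (n:ℝ) * d) ^ 2 := by
    set K := (1 + (n:ℝ) * d) ^ 2 with hK
    have hnd0 : 0 ≤ (n:ℝ) * d := mul_nonneg hn0.le hd0
    have hK1 : 1 ≤ K := by nlinarith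
    have hd2 : s * ((n:ℝ) ^ 2 * d ^ 2) = d ^ 2 := by
      rw [← mul_assoc, hsn, one_mul]
    have hsK : s + d ^ 2 ≤ s * K := by nlinarith [mul_nonneg hs0.le hnd0]
    have ha2 : a ^ 2 ≤ (b + d/2) ^ 2 := by nlinarith
    have ha3 : 2 * a ^ 2 ≤ 4 * b ^ 2 + d ^ 2 := by nlinarith [sq_nonneg (b - d/2)]
    have hbK : 4 * b ^ 2 ≤ 6 * b ^ 2 * K := by
      nlinarith [mul_nonneg (sq_nonneg b) (sub_nonneg.2 hK1)]
    nlinarith [hsK, ha3, hbK, mul_nonneg hs0.le (sub_nonneg.2 hK1)]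
  calc 1 - x + s = 2 * a ^ 2 + s := by rw [h1x]
    _ ≤ 3 * (2 * b ^ 2 + s) * (1 + (n:ℝ) * d) ^ 2 := hgoal
    _ = 3 * (1 - y + s) * (1 + (n:ℝ) * d) ^ 2 := by rw [h1y]

/-- Same estimate for the factor `1 + x + n⁻²`, by the substitution `x ↦ -x`. -/
lemma key_est' (x : ℝ) (hx : x ∈ Set.Icc (-1:ℝ) 1) (y : ℝ) (hy : y ∈ Set.Icc (-1:ℝ) 1)
    (n : ℕ) (hn : 1 ≤ n) :
    1 + x + ((n : ℝ))⁻¹ ^ 2 ≤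
      3 * (1 + y + ((n : ℝ))⁻¹ ^ 2) *
        (1 + (n : ℝ) * |Real.arccos x - Real.arccos y|) ^ 2 := by
  have hx' : -x ∈ Set.Icc (-1:ℝ) 1 := ⟨by linarith [hx.2], by linarith [hx.1]⟩
  have hy' : -y ∈ Set.Icc (-1:ℝ) 1 := ⟨by linarith [hy.2], by linarith [hy.1]⟩
  have h := key_est (-x) hx' (-y) hy' n hn
  rw [Real.arccos_neg, Real.arccos_neg] at h
  have habs : |π - Real.arccos x - (π - Real.arccos y)| = |Real.arccos x - Real.arccos y| := by
    rw [show π - Real.arccos x - (π - Real.arccos y) = -(Real.arccos x - Real.arccos y) by ring,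
      abs_neg]
  rw [habs] at h
  linarith [h]

/-- Combining lemma for the rpow manipulation. -/
lemma combine_est (α β m : ℝ) (hα : 0 < α + 1/2) (hβ : 0 < β + 1/2)
    (hαm : α ≤ m) (hβm : β ≤ m) (A A' B B' T : ℝ)
    (hA' : 0 < A') (hB' : 0 < B') (hA0 : 0 ≤ A) (hB0 : 0 ≤ B) (hT : 1 ≤ T)
    (hA : A ≤ 3 * A' * T ^ 2) (hB : B ≤ B') :
    A ^ (α + 1/2) * B ^ (β + 1/2) ≤
      (3:ℝ) ^ (m + 1/2) * (A' ^ (α + 1/2) * B' ^ (β + 1/2)) * T ^ (2 * m + 1) := by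
  have hT0 : (0:ℝ) ≤ T := by linarith
  have hTsq : (0:ℝ) ≤ T ^ 2 := sq_nonneg T
  have hpow : ((T ^ 2 : ℝ)) ^ (α + 1/2) = T ^ (2 * α + 1) := by
    rw [← Real.rpow_natCast T 2, ← Real.rpow_mul hT0]
    norm_num
    ring_nf
  have h1 : A ^ (α + 1/2) ≤ (3:ℝ) ^ (α + 1/2) * A' ^ (α + 1/2) * T ^ (2 * α + 1) := by
    calc A ^ (α + 1/2) ≤ (3 * A' * T ^ 2) ^ (α + 1/2) :=
          Real.rpow_le_rpow hA0 hA hα.le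
      _ = (3:ℝ) ^ (α + 1/2) * A' ^ (α + 1/2) * (T ^ 2) ^ (α + 1/2) := by
          rw [Real.mul_rpow (by positivity) hTsq, Real.mul_rpow (by norm_num) hA'.le]
      _ = (3:ℝ) ^ (α + 1/2) * A' ^ (α + 1/2) * T ^ (2 * α + 1) := by rw [hpow]
  have h3 : (3:ℝ) ^ (α + 1/2) ≤ (3:ℝ) ^ (m + 1/2) :=
    Real.rpow_le_rpow_of_exponent_le (by norm_num) (by linarith)
  have h4 : T ^ (2 * α + 1) ≤ T ^ (2 * m + 1) :=
    Real.rpow_le_rpow_of_exponent_le hT (by linarith)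
  have h2 : B ^ (β + 1/2) ≤ B' ^ (β + 1/2) := Real.rpow_le_rpow hB0 hB hβ.le
  have hA'pos : (0:ℝ) ≤ A' ^ (α + 1/2) := Real.rpow_nonneg hA'.le _
  have hApos : (0:ℝ) ≤ A ^ (α + 1/2) := Real.rpow_nonneg hA0 _
  have hBpos : (0:ℝ) ≤ B ^ (β + 1/2) := Real.rpow_nonneg hB0 _
  have hB'pos : (0:ℝ) ≤ B' ^ (β + 1/2) := Real.rpow_nonneg hB'.le _
  have h3pos : (0:ℝ) ≤ (3:ℝ) ^ (α + 1/2) := Real.rpow_nonneg (by norm_num) _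
  have hTpos : (0:ℝ) ≤ T ^ (2 * α + 1) := Real.rpow_nonneg hT0 _
  calc A ^ (α + 1/2) * B ^ (β + 1/2)
      ≤ ((3:ℝ) ^ (α + 1/2) * A' ^ (α + 1/2) * T ^ (2 * α + 1)) * B' ^ (β + 1/2) := by
        apply mul_le_mul h1 h2 hBpos
        positivity
    _ ≤ ((3:ℝ) ^ (m + 1/2) * A' ^ (α + 1/2) * T ^ (2 * m + 1)) * B' ^ (β + 1/2) := by
        apply mul_le_mul_of_nonneg_right _ hB'pos
        apply mul_le_mul (mul_le_mul h3 le_rfl hA'pos (Real.rpow_nonneg (by norm_num) _)) h4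
          hTpos (by positivity)
    _ = (3:ℝ) ^ (m + 1/2) * (A' ^ (α + 1/2) * B' ^ (β + 1/2)) * T ^ (2 * m + 1) := by ring

theorem stmt0 (α β : ℝ) (hα : α > -(1/2)) (hβ : β > -(1/2)) :
    ∃ c > 0, ∀ x ∈ Set.Icc (-1:ℝ) 1, ∀ y ∈ Set.Icc (-1:ℝ) 1, ∀ n : ℕ, 1 ≤ n →
      jacobiW α β n x ≤
        c * jacobiW α β n y *
          (1 + (n : ℝ) * |Real.arccos x - Real.arccos y|) ^ (2 * max α β + 1) := by
  set m := max α β with hm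
  refine ⟨(3:ℝ) ^ (m + 1/2), Real.rpow_pos_of_pos (by norm_num) _, ?_⟩
  intro x hx y hy n hn
  have hα' : 0 < α + 1/2 := by linarith
  have hβ' : 0 < β + 1/2 := by linarith
  have hn1 : (1:ℝ) ≤ (n:ℝ) := by exact_mod_cast hn
  have hn0 : (0:ℝ) < (n:ℝ) := by linarith
  set s := ((n : ℝ))⁻¹ ^ 2 with hs
  have hs0 : 0 < s := by positivity
  set T := 1 + (n : ℝ) * |Real.arccos x - Real.arccos y| with hT
  have hT1 : 1 ≤ T := by
    have : 0 ≤ (n : ℝ) * |Real.arccos x - Real.arccos y| :=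
      mul_nonneg hn0.le (abs_nonneg _)
    linarith
  have hAx0 : 0 ≤ 1 - x + s := by linarith [hx.2, hs0.le]
  have hBx0 : 0 ≤ 1 + x + s := by linarith [hx.1, hs0.le]
  have hAy0 : 0 < 1 - y + s := by linarith [hy.2]
  have hBy0 : 0 < 1 + y + s := by linarith [hy.1]
  unfold jacobiW
  rcases le_total x y with hxy | hxy
  · -- x ≤ y : the `B` factor decreases, the `A` factor is controlled
    have hA := key_est x hx y hy n hn
    have hB : 1 + x + s ≤ 1 + y + s := by linarith
    have := combine_est α β m hα' hβ' (le_max_left _ _) (le_max_right _ _)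
      (1 - x + s) (1 - y + s) (1 + x + s) (1 + y + s) T hAy0 hBy0 hAx0 hBx0 hT1
      (by rw [hT]; exact hA) hB
    calc (1 - x + s) ^ (α + 1/2) * (1 + x + s) ^ (β + 1/2)
        ≤ (3:ℝ) ^ (m + 1/2) * ((1 - y + s) ^ (α + 1/2) * (1 + y + s) ^ (β + 1/2)) *
            T ^ (2 * m + 1) := this
      _ = (3:ℝ) ^ (m + 1/2) * ((1 - y + s) ^ (α + 1/2) * (1 + y + s) ^ (β + 1/2)) *
            T ^ (2 * m + 1) := rfl
  · -- y ≤ x : the `A` factor decreases, the `B` factor is controlled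
    have hB := key_est' x hx y hy n hn
    have hA : 1 - x + s ≤ 1 - y + s := by linarith
    have h := combine_est β α m hβ' hα' (le_max_right _ _) (le_max_left _ _)
      (1 + x + s) (1 + y + s) (1 - x + s) (1 - y + s) T hBy0 hAy0 hBx0 hAx0 hT1
      (by rw [hT]; exact hB) hA
    calc (1 - x + s) ^ (α + 1/2) * (1 + x + s) ^ (β + 1/2)
        = (1 + x + s) ^ (β + 1/2) * (1 - x + s) ^ (α + 1/2) := by ring
      _ ≤ (3:ℝ) ^ (m + 1/2) * ((1 + y + s) ^ (β + 1/2) * (1 - y + s) ^ (α + 1/2)) *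
            T ^ (2 * m + 1) := h
      _ = (3:ℝ) ^ (m + 1/2) * ((1 - y + s) ^ (α + 1/2) * (1 + y + s) ^ (β + 1/2)) *
            T ^ (2 * m + 1) := by ring
end

section
/- Let α, β > -1 and w(x) = (1-x)^α(1+x)^β on [-1,1]. For y ∈ [0,1] and 0 < r ≤ π, define the ball B_y(r) = {x ∈ [-1,1] : |arccos x - arccos y| ≤ r} and μ(B_y(r)) = ∫_{B_y(r)} w(x) dx. Then μ(B_y(r)) is comparable to r·(d(y,1)+r)^{2α+1}, i.e., there exist constants c₁, c₂ > 0 depending only on α, β such that c₁·r·(arccos y + r)^{2α+1} ≤ μ(B_y(r)) ≤ c₂·r·(arccos y + r)^{2α+1}. -/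
/-! With `t = arccos y ∈ [0, π/2]` the ball is the interval `[cos b, cos a]`, where
`a = max 0 (t - r)` and `b = min π (t + r)`. As long as `b ≤ 3π/4`, the factor `(1 + x) ^ β` is
bounded above and below on it, so its measure is comparable to
`∫ (1 - x) ^ α = ((1 - cos b) ^ (α + 1) - (1 - cos a) ^ (α + 1)) / (α + 1)`. Bernoulli's
inequality gives `v ^ p - u ^ p ≍ (v - u) v ^ (p - 1)`, and `1 - cos θ ≍ θ²`,
`cos a - cos b ≍ b (b - a)`, so this is `≍ (b - a) b ^ (2α + 1) ≍ r (t + r) ^ (2α + 1)`.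
For the lower bound one keeps only the part of the ball where `arccos x ≤ 3π/4`; for the upper
bound, if `t + r > 3π/4` then `r ≥ π/4` and the total mass of `w` suffices. -/

open Real MeasureTheory Set

lemma rpow_mem_uIcc_of_mem_Icc {A B x : ℝ} (q : ℝ) (hA : 0 < A) (hx : x ∈ Icc A B) :
    x ^ q ∈ uIcc (A ^ q) (B ^ q) := by
  have hx₀ : 0 < x := hA.trans_le hx.1
  rcases le_or_gt 0 q with hq | hq
  · exact mem_uIcc_of_le (rpow_le_rpow hA.le hx.1 hq) (rpow_le_rpow hx₀.le hx.2 hq)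
  · exact mem_uIcc_of_ge (rpow_le_rpow_of_nonpos hx₀ hx.2 hq.le)
      (rpow_le_rpow_of_nonpos hA hx.1 hq.le)

/-- Bernoulli's inequality, in both directions. -/
lemma one_sub_rpow_mem_uIcc {p s : ℝ} (hp : 0 < p) (hs₀ : 0 ≤ s) (hs₁ : s ≤ 1) :
    1 - s ^ p ∈ uIcc (1 - s) (p * (1 - s)) := by
  rcases le_or_gt 1 p with h1p | hp1
  · have hsp : s ^ p ≤ s := by
      simpa using rpow_le_rpow_of_exponent_ge' hs₀ hs₁ zero_le_one h1p
    have hber := one_add_mul_self_le_rpow_one_add (s := s - 1) (by linarith) h1p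
    rw [add_sub_cancel] at hber
    exact mem_uIcc_of_le (by linarith) (by linarith)
  · have hsp : s ≤ s ^ p := by
      simpa using rpow_le_rpow_of_exponent_ge' hs₀ hs₁ hp.le hp1.le
    have hber := rpow_one_add_le_one_add_mul_self (s := s - 1) (by linarith) hp.le hp1.le
    rw [add_sub_cancel] at hber
    exact mem_uIcc_of_ge (by linarith) (by linarith)

lemma rpow_sub_rpow_mem_uIcc {p u v : ℝ} (hp : 0 < p) (hu : 0 ≤ u) (huv : u ≤ v) :
    v ^ p - u ^ p ∈ uIcc ((v - u) * v ^ (p - 1)) (p * ((v - u) * v ^ (p - 1))) := by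
  rcases (hu.trans huv).eq_or_lt with hv | hv
  · obtain rfl : u = 0 := le_antisymm (huv.trans_eq hv.symm) hu
    subst hv
    simp [zero_rpow hp.ne']
  · set s := u / v
    have hu' : u = s * v := (div_mul_cancel₀ u hv.ne').symm
    have hup : u ^ p = s ^ p * v ^ p := by rw [hu', mul_rpow (div_nonneg hu hv.le) hv.le]
    have hvp : (v - u) * v ^ (p - 1) = (1 - s) * v ^ p := by
      rw [rpow_sub_one hv.ne', hu']; field_simp
    rw [hup, hvp, ← one_sub_mul, ← mul_assoc, ← image_mul_const_uIcc]
    exact mem_image_of_mem _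
      (one_sub_rpow_mem_uIcc hp (div_nonneg hu hv.le) ((div_le_one hv).2 huv))

lemma div_five_le_sin {θ : ℝ} (h₀ : 0 ≤ θ) (h₁ : θ ≤ 3 * π / 4) : θ / 5 ≤ sin θ := by
  have hπ₃ : 3 < π := pi_gt_three
  have hπ₄ : π < 3.15 := pi_lt_d2
  rcases le_or_gt θ (π / 2) with h | h
  · have hjordan := mul_le_sin h₀ h
    have : θ / 5 ≤ 2 / π * θ := by
      rw [div_mul_eq_mul_div, div_le_div_iff₀ (by norm_num) pi_pos]; nlinarith
    linarith
  · have hjordan := mul_le_sin (x := π - θ) (by linarith) (by linarith)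
    rw [sin_pi_sub, div_mul_eq_mul_div] at hjordan
    have : θ / 5 ≤ 2 * (π - θ) / π := by rw [le_div_iff₀ pi_pos]; nlinarith
    linarith

lemma cos_sub_cos_mem_Icc {a b : ℝ} (ha : 0 ≤ a) (hab : a ≤ b) (hb : b ≤ 3 * π / 4) :
    cos a - cos b ∈ Icc (b * (b - a) / 50) (b * (b - a)) := by
  have hcos : cos a - cos b = 2 * sin ((a + b) / 2) * sin ((b - a) / 2) := by
    rw [cos_sub_cos, ← neg_sub b a, neg_div, sin_neg]; ring
  have hsum := div_five_le_sin (θ := (a + b) / 2) (by linarith) (by linarith)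
  have hdiff := div_five_le_sin (θ := (b - a) / 2) (by linarith) (by linarith)
  have hsum' := sin_le (x := (a + b) / 2) (by linarith)
  have hdiff' := sin_le (x := (b - a) / 2) (by linarith)
  rw [hcos]
  have hab' := mul_nonneg ha (sub_nonneg.2 hab)
  constructor
  · nlinarith [mul_le_mul hsum hdiff (by linarith) (by linarith)]
  · nlinarith [mul_le_mul hsum' hdiff' (by linarith) (by linarith)]

lemma one_sub_cos_rpow_mem_uIcc (α : ℝ) {b : ℝ} (hb₀ : 0 < b) (hb : b ≤ π) :
    (1 - cos b) ^ α ∈ uIcc ((2 / π ^ 2) ^ α * b ^ (2 * α)) ((1 / 2) ^ α * b ^ (2 * α)) := by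
  have hsq : ∀ c : ℝ, 0 ≤ c → (c * b ^ 2) ^ α = c ^ α * b ^ (2 * α) := fun c hc => by
    rw [mul_rpow hc (by positivity), ← rpow_natCast, ← rpow_mul hb₀.le]; norm_num
  rw [← hsq _ (by positivity), ← hsq _ (by norm_num)]
  refine rpow_mem_uIcc_of_mem_Icc α (by positivity) ⟨?_, ?_⟩
  · have := cos_le_one_sub_mul_cos_sq (x := b) (by rwa [abs_of_pos hb₀]); linarith
  · have := one_sub_sq_div_two_le_cos (x := b); linarith

lemma one_sub_cos_rpow_sub_comparable {α : ℝ} (hα : -1 < α) :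
    ∃ c > (0:ℝ), ∃ C > (0:ℝ), ∀ a b : ℝ, 0 ≤ a → a ≤ b → 0 < b → b ≤ 3 * π / 4 →
      c * ((b - a) * b ^ (2 * α + 1)) ≤ (1 - cos b) ^ (α + 1) - (1 - cos a) ^ (α + 1) ∧
      (1 - cos b) ^ (α + 1) - (1 - cos a) ^ (α + 1) ≤ C * ((b - a) * b ^ (2 * α + 1)) := by
  have hp : 0 < α + 1 := by linarith
  set m := min ((2 / π ^ 2) ^ α) ((1 / 2 : ℝ) ^ α)
  set M := max ((2 / π ^ 2) ^ α) ((1 / 2 : ℝ) ^ α)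
  have hm : 0 < m := lt_min (by positivity) (by positivity)
  refine ⟨min 1 (α + 1) * (m / 50), mul_pos (lt_min one_pos hp) (by positivity),
    max 1 (α + 1) * M, mul_pos (lt_max_of_lt_left one_pos) (hm.trans_le min_le_max), ?_⟩
  intro a b ha hab hb hb34
  have hcos : cos b ≤ cos a := cos_le_cos_of_nonneg_of_le_pi ha (by linarith [pi_pos]) hab
  obtain ⟨hΔ₁, hΔ₂⟩ := cos_sub_cos_mem_Icc ha hab hb34
  obtain ⟨hv₁, hv₂⟩ := one_sub_cos_rpow_mem_uIcc α hb (by linarith [pi_pos])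
  have hD := rpow_sub_rpow_mem_uIcc hp (sub_nonneg.2 (cos_le_one a)) (sub_le_sub_left hcos 1)
  rw [add_sub_cancel_right, sub_sub_sub_cancel_left] at hD
  have hX : 0 ≤ (cos a - cos b) * (1 - cos b) ^ α :=
    mul_nonneg (by linarith) (rpow_nonneg (by linarith [cos_le_one b]) _)
  replace hD : min 1 (α + 1) * ((cos a - cos b) * (1 - cos b) ^ α) ≤
        (1 - cos b) ^ (α + 1) - (1 - cos a) ^ (α + 1) ∧
      (1 - cos b) ^ (α + 1) - (1 - cos a) ^ (α + 1) ≤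
        max 1 (α + 1) * ((cos a - cos b) * (1 - cos b) ^ α) := by
    rw [min_mul_of_nonneg _ _ hX, max_mul_of_nonneg _ _ hX, one_mul]; exact hD
  have hb2 : 0 ≤ b ^ (2 * α) := rpow_nonneg hb.le _
  have hpow : b ^ (2 * α + 1) = b * b ^ (2 * α) := by rw [rpow_add hb, rpow_one, mul_comm]
  constructor
  · calc min 1 (α + 1) * (m / 50) * ((b - a) * b ^ (2 * α + 1))
        = min 1 (α + 1) * (b * (b - a) / 50 * (m * b ^ (2 * α))) := by rw [hpow]; ring
      _ ≤ min 1 (α + 1) * ((cos a - cos b) * (1 - cos b) ^ α) := by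
          gcongr
          exact hv₁.trans' (by rw [min_mul_of_nonneg _ _ hb2])
      _ ≤ _ := hD.1
  · calc _ ≤ max 1 (α + 1) * ((cos a - cos b) * (1 - cos b) ^ α) := hD.2
      _ ≤ max 1 (α + 1) * (b * (b - a) * (M * b ^ (2 * α))) := by
          gcongr
          · exact rpow_nonneg (by linarith [cos_le_one b]) _
          · exact hv₂.trans (by rw [max_mul_of_nonneg _ _ hb2])
      _ = max 1 (α + 1) * M * ((b - a) * b ^ (2 * α + 1)) := by rw [hpow]; ring

noncomputable def jacobiWeight (α β x : ℝ) : ℝ := (1 - x) ^ α * (1 + x) ^ β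

lemma jacobiWeight_nonneg (α β : ℝ) {x : ℝ} (hx : x ∈ Icc (-1 : ℝ) 1) :
    0 ≤ jacobiWeight α β x :=
  mul_nonneg (rpow_nonneg (by linarith [hx.2]) _) (rpow_nonneg (by linarith [hx.1]) _)

lemma intervalIntegrable_one_sub_rpow {α : ℝ} (hα : -1 < α) (u v : ℝ) :
    IntervalIntegrable (fun x : ℝ => (1 - x) ^ α) volume u v := by
  simpa using
    (intervalIntegral.intervalIntegrable_rpow' hα (a := 1 - u) (b := 1 - v)).comp_sub_left 1

lemma intervalIntegrable_one_add_rpow {β : ℝ} (hβ : -1 < β) (u v : ℝ) :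
    IntervalIntegrable (fun x : ℝ => (1 + x) ^ β) volume u v := by
  simpa using
    (intervalIntegral.intervalIntegrable_rpow' hβ (a := 1 + u) (b := 1 + v)).comp_add_left 1

lemma integrableOn_jacobiWeight_Icc {α : ℝ} (hα : -1 < α) (β : ℝ) {u v : ℝ}
    (hu : -1 < u) (huv : u ≤ v) : IntegrableOn (jacobiWeight α β) (Icc u v) := by
  refine IntegrableOn.mul_continuousOn ((intervalIntegrable_iff_integrableOn_Icc_of_le huv).1
    (intervalIntegrable_one_sub_rpow hα u v)) ?_ isCompact_Icc
  exact ContinuousOn.rpow_const (by fun_prop) fun x hx => Or.inl (by linarith [hx.1])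

lemma integrableOn_jacobiWeight {α β : ℝ} (hα : -1 < α) (hβ : -1 < β) :
    IntegrableOn (jacobiWeight α β) (Icc (-1) 1) := by
  rw [← Icc_union_Icc_eq_Icc (by norm_num : (-1 : ℝ) ≤ 0) zero_le_one]
  refine IntegrableOn.union ?_ (integrableOn_jacobiWeight_Icc hα β (by norm_num) zero_le_one)
  refine IntegrableOn.continuousOn_mul ?_ ((intervalIntegrable_iff_integrableOn_Icc_of_le
    (by norm_num)).1 (intervalIntegrable_one_add_rpow hβ (-1) 0)) isCompact_Icc
  exact ContinuousOn.rpow_const (by fun_prop) fun x hx => Or.inl (by linarith [hx.2])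

lemma setIntegral_jacobiWeight_mono {α β : ℝ} (hα : -1 < α) (hβ : -1 < β) {s t : Set ℝ}
    (hst : s ⊆ t) (ht : t ⊆ Icc (-1) 1) (htm : MeasurableSet t) :
    ∫ x in s, jacobiWeight α β x ≤ ∫ x in t, jacobiWeight α β x :=
  setIntegral_mono_set ((integrableOn_jacobiWeight hα hβ).mono_set ht)
    (ae_restrict_of_forall_mem htm fun _ hx => jacobiWeight_nonneg α β (ht hx)) hst.eventuallyLE

lemma integral_Icc_one_sub_rpow {α : ℝ} (hα : -1 < α) {u v : ℝ} (huv : u ≤ v) :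
    ∫ x in Icc u v, (1 - x) ^ α = ((1 - u) ^ (α + 1) - (1 - v) ^ (α + 1)) / (α + 1) := by
  rw [integral_Icc_eq_integral_Ioc, ← intervalIntegral.integral_of_le huv,
    intervalIntegral.integral_comp_sub_left (fun s => s ^ α), integral_rpow (Or.inl hα)]

lemma neg_three_div_four_le_cos {b : ℝ} (hb₀ : 0 ≤ b) (hb : b ≤ 3 * π / 4) : -3 / 4 ≤ cos b := by
  have h : cos (3 * π / 4) ≤ cos b :=
    cos_le_cos_of_nonneg_of_le_pi hb₀ (by linarith [pi_pos]) hb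
  rw [show 3 * π / 4 = π - π / 4 by ring, cos_pi_sub, cos_pi_div_four] at h
  nlinarith [sq_sqrt (zero_le_two : (0 : ℝ) ≤ 2), sqrt_nonneg 2]

lemma integral_jacobiWeight_Icc_cos_comparable {α : ℝ} (hα : -1 < α) (β : ℝ) :
    ∃ c > (0:ℝ), ∃ C > (0:ℝ), ∀ a b : ℝ, 0 ≤ a → a ≤ b → 0 < b → b ≤ 3 * π / 4 →
      c * ((b - a) * b ^ (2 * α + 1)) ≤ ∫ x in Icc (cos b) (cos a), jacobiWeight α β x ∧
      ∫ x in Icc (cos b) (cos a), jacobiWeight α β x ≤ C * ((b - a) * b ^ (2 * α + 1)) := by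
  obtain ⟨c, hc, C, hC, hcomp⟩ := one_sub_cos_rpow_sub_comparable hα
  have hp : 0 < α + 1 := by linarith
  set m := min ((1 / 4 : ℝ) ^ β) (2 ^ β)
  set M := max ((1 / 4 : ℝ) ^ β) (2 ^ β)
  have hm : 0 < m := lt_min (by positivity) (by positivity)
  refine ⟨m / (α + 1) * c, by positivity, M / (α + 1) * C,
    mul_pos (div_pos (hm.trans_le min_le_max) hp) hC, ?_⟩
  intro a b ha hab hb hb34
  have hcos : cos b ≤ cos a := cos_le_cos_of_nonneg_of_le_pi ha (by linarith [pi_pos]) hab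
  have hcb := neg_three_div_four_le_cos hb.le hb34
  have hw : ∀ x ∈ Icc (cos b) (cos a),
      m * (1 - x) ^ α ≤ jacobiWeight α β x ∧ jacobiWeight α β x ≤ M * (1 - x) ^ α := by
    intro x hx
    have h1 : 0 ≤ (1 - x) ^ α := rpow_nonneg (by linarith [hx.2, cos_le_one a]) _
    obtain ⟨h2, h3⟩ := rpow_mem_uIcc_of_mem_Icc (A := 1 / 4) (B := 2) (x := 1 + x) β (by norm_num)
      ⟨by linarith [hx.1], by linarith [hx.2, cos_le_one a]⟩
    rw [jacobiWeight, mul_comm m, mul_comm M]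
    exact ⟨mul_le_mul_of_nonneg_left h2 h1, mul_le_mul_of_nonneg_left h3 h1⟩
  have hint := (intervalIntegrable_iff_integrableOn_Icc_of_le hcos).1
    (intervalIntegrable_one_sub_rpow hα (cos b) (cos a))
  have hwint := integrableOn_jacobiWeight_Icc hα β (by linarith) hcos
  have hmass := integral_Icc_one_sub_rpow hα hcos
  obtain ⟨hlow, hup⟩ := hcomp a b ha hab hb hb34
  constructor
  · calc m / (α + 1) * c * ((b - a) * b ^ (2 * α + 1))
        ≤ m / (α + 1) * ((1 - cos b) ^ (α + 1) - (1 - cos a) ^ (α + 1)) := by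
          rw [mul_assoc]; gcongr
      _ = ∫ x in Icc (cos b) (cos a), m * (1 - x) ^ α := by
          rw [integral_const_mul, hmass]; ring
      _ ≤ _ := setIntegral_mono_on (hint.const_mul m) hwint measurableSet_Icc
          fun x hx => (hw x hx).1
  · calc ∫ x in Icc (cos b) (cos a), jacobiWeight α β x
        ≤ ∫ x in Icc (cos b) (cos a), M * (1 - x) ^ α :=
          setIntegral_mono_on hwint (hint.const_mul M) measurableSet_Icc fun x hx => (hw x hx).2
      _ = M / (α + 1) * ((1 - cos b) ^ (α + 1) - (1 - cos a) ^ (α + 1)) := by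
          rw [integral_const_mul, hmass]; ring
      _ ≤ M / (α + 1) * C * ((b - a) * b ^ (2 * α + 1)) := by
          rw [mul_assoc]; gcongr

lemma cos_le_iff_arccos_le {x b : ℝ} (hx : x ∈ Icc (-1 : ℝ) 1) (hb : b ∈ Icc 0 π) :
    cos b ≤ x ↔ arccos x ≤ b := by
  conv_lhs => rw [← cos_arccos hx.1 hx.2]
  exact strictAntiOn_cos.le_iff_ge hb ⟨arccos_nonneg x, arccos_le_pi x⟩

lemma le_cos_iff_le_arccos {x a : ℝ} (hx : x ∈ Icc (-1 : ℝ) 1) (ha : a ∈ Icc 0 π) :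
    x ≤ cos a ↔ a ≤ arccos x := by
  conv_lhs => rw [← cos_arccos hx.1 hx.2]
  exact strictAntiOn_cos.le_iff_ge ⟨arccos_nonneg x, arccos_le_pi x⟩ ha

lemma arccos_ball_eq_Icc_cos {t r : ℝ} (ht₀ : 0 ≤ t) (htπ : t ≤ π) (hr : 0 ≤ r) :
    {x : ℝ | x ∈ Icc (-1 : ℝ) 1 ∧ |arccos x - t| ≤ r} =
      Icc (cos (min π (t + r))) (cos (max 0 (t - r))) := by
  have hb : min π (t + r) ∈ Icc 0 π := ⟨le_min pi_pos.le (by linarith), min_le_left _ _⟩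
  have ha : max 0 (t - r) ∈ Icc 0 π := ⟨le_max_left _ _, max_le pi_pos.le (by linarith)⟩
  ext x
  simp only [mem_ofPred_eq, abs_le, neg_le_sub_iff_le_add, sub_le_iff_le_add]
  constructor
  · rintro ⟨hx, h₁, h₂⟩
    rw [mem_Icc, cos_le_iff_arccos_le hx hb, le_cos_iff_le_arccos hx ha]
    exact ⟨le_min (arccos_le_pi x) (by linarith), max_le (arccos_nonneg x) (by linarith)⟩
  · intro hx'
    have hx : x ∈ Icc (-1 : ℝ) 1 := ⟨(neg_one_le_cos _).trans hx'.1, hx'.2.trans (cos_le_one _)⟩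
    rw [mem_Icc, cos_le_iff_arccos_le hx hb, le_cos_iff_le_arccos hx ha] at hx'
    exact ⟨hx, by linarith [le_max_right 0 (t - r)], by linarith [min_le_right π (t + r)]⟩

lemma le_integral_jacobiWeight_arccos_ball {α β : ℝ} (hα : -1 < α) (hβ : -1 < β) :
    ∃ c > (0:ℝ), ∀ t ∈ Icc 0 (π / 2), ∀ r : ℝ, 0 < r → r ≤ π →
      c * r * (t + r) ^ (2 * α + 1) ≤
        ∫ x in Icc (cos (min π (t + r))) (cos (max 0 (t - r))), jacobiWeight α β x := by
  obtain ⟨c, hc, _, _, hcomp⟩ := integral_jacobiWeight_Icc_cos_comparable hα β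
  set κ := min ((1 / 2 : ℝ) ^ (2 * α + 1)) 1
  refine ⟨c * κ / 2, by positivity, fun t ⟨ht₀, ht⟩ r hr hrπ => ?_⟩
  have hπ := pi_pos
  set a := max 0 (t - r)
  set b := min (t + r) (3 * π / 4)
  have ha₀ : 0 ≤ a := le_max_left _ _
  have hb : (t + r) / 2 ≤ b := le_min (by linarith) (by linarith)
  have hbπ : b ≤ π := (min_le_right _ _).trans (by linarith)
  have hab : r / 2 ≤ b - a := by
    rcases min_cases (t + r) (3 * π / 4) with h | h <;>
    rcases max_cases 0 (t - r) with h' | h' <;> linarith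
  have hpow : κ * (t + r) ^ (2 * α + 1) ≤ b ^ (2 * α + 1) := calc
    κ * (t + r) ^ (2 * α + 1) = min (((t + r) / 2) ^ (2 * α + 1)) ((t + r) ^ (2 * α + 1)) := by
      rw [min_mul_of_nonneg _ _ (by positivity), one_mul, ← mul_rpow (by norm_num) (by linarith),
        one_div_mul_eq_div]
    _ ≤ b ^ (2 * α + 1) :=
      (rpow_mem_uIcc_of_mem_Icc (2 * α + 1) (by linarith) ⟨hb, min_le_left _ _⟩).1
  calc c * κ / 2 * r * (t + r) ^ (2 * α + 1)
      = c * (r / 2 * (κ * (t + r) ^ (2 * α + 1))) := by ring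
    _ ≤ c * ((b - a) * b ^ (2 * α + 1)) :=
      mul_le_mul_of_nonneg_left (mul_le_mul hab hpow (by positivity) (by linarith)) hc.le
    _ ≤ ∫ x in Icc (cos b) (cos a), jacobiWeight α β x :=
      (hcomp a b ha₀ (by linarith) (by linarith) (min_le_right _ _)).1
    _ ≤ _ := by
      refine setIntegral_jacobiWeight_mono hα hβ (Icc_subset_Icc_left ?_)
        (Icc_subset_Icc (neg_one_le_cos _) (cos_le_one _)) measurableSet_Icc
      exact cos_le_cos_of_nonneg_of_le_pi (by linarith) (min_le_left _ _)
        (le_min hbπ (min_le_left _ _))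

lemma integral_jacobiWeight_arccos_ball_le {α β : ℝ} (hα : -1 < α) (hβ : -1 < β) :
    ∃ C > (0:ℝ), ∀ t ∈ Icc 0 (π / 2), ∀ r : ℝ, 0 < r → r ≤ π →
      ∫ x in Icc (cos (min π (t + r))) (cos (max 0 (t - r))), jacobiWeight α β x ≤
        C * r * (t + r) ^ (2 * α + 1) := by
  obtain ⟨_, _, C, hC, hcomp⟩ := integral_jacobiWeight_Icc_cos_comparable hα β
  have hπ := pi_pos
  set M := ∫ x in Icc (-1 : ℝ) 1, jacobiWeight α β x
  have hM : 0 ≤ M := setIntegral_nonneg measurableSet_Icc fun x hx => jacobiWeight_nonneg α β hx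
  set m := π / 4 * min ((3 * π / 4) ^ (2 * α + 1)) ((3 * π / 2) ^ (2 * α + 1))
  have hm : 0 < m := by positivity
  refine ⟨max (2 * C) (M / m), lt_max_of_lt_left (by positivity), fun t ⟨ht₀, ht⟩ r hr hrπ => ?_⟩
  have hpow : 0 ≤ (t + r) ^ (2 * α + 1) := rpow_nonneg (by linarith) _
  rcases le_total (t + r) (3 * π / 4) with h | h
  · rw [min_eq_right (h.trans (by linarith))]
    calc ∫ x in Icc (cos (t + r)) (cos (max 0 (t - r))), jacobiWeight α β x
        ≤ C * ((t + r - max 0 (t - r)) * (t + r) ^ (2 * α + 1)) :=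
          (hcomp _ _ (le_max_left _ _) (max_le (by linarith) (by linarith)) (by linarith) h).2
      _ ≤ C * (2 * r * (t + r) ^ (2 * α + 1)) := by
          gcongr
          linarith [le_max_right 0 (t - r)]
      _ = 2 * C * r * (t + r) ^ (2 * α + 1) := by ring
      _ ≤ _ := by gcongr; exact le_max_left _ _
  · have hrm : m ≤ r * (t + r) ^ (2 * α + 1) :=
      mul_le_mul (by linarith)
        (rpow_mem_uIcc_of_mem_Icc (2 * α + 1) (by positivity) ⟨h, by linarith⟩).1
        (by positivity) hr.le
    calc ∫ x in Icc (cos (min π (t + r))) (cos (max 0 (t - r))), jacobiWeight α β x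
        ≤ M := setIntegral_jacobiWeight_mono hα hβ
          (Icc_subset_Icc (neg_one_le_cos _) (cos_le_one _)) subset_rfl measurableSet_Icc
      _ = M / m * m := (div_mul_cancel₀ M hm.ne').symm
      _ ≤ max (2 * C) (M / m) * (r * (t + r) ^ (2 * α + 1)) :=
          mul_le_mul (le_max_right _ _) hrm hm.le ((div_nonneg hM hm.le).trans (le_max_right _ _))
      _ = _ := by ring

theorem stmt1 (α β : ℝ) (hα : α > -1) (hβ : β > -1) :
    ∃ c₁ > (0:ℝ), ∃ c₂ > (0:ℝ), ∀ y ∈ Set.Icc (0:ℝ) 1, ∀ r : ℝ, 0 < r → r ≤ π →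
      c₁ * r * (Real.arccos y + r) ^ (2*α+1) ≤
        (∫ x in {x : ℝ | x ∈ Set.Icc (-1:ℝ) 1 ∧ |Real.arccos x - Real.arccos y| ≤ r},
          (1 - x) ^ α * (1 + x) ^ β) ∧
      (∫ x in {x : ℝ | x ∈ Set.Icc (-1:ℝ) 1 ∧ |Real.arccos x - Real.arccos y| ≤ r},
          (1 - x) ^ α * (1 + x) ^ β) ≤
        c₂ * r * (Real.arccos y + r) ^ (2*α+1) := by
  obtain ⟨c₁, hc₁, hlower⟩ := le_integral_jacobiWeight_arccos_ball hα hβ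
  obtain ⟨c₂, hc₂, hupper⟩ := integral_jacobiWeight_arccos_ball_le hα hβ
  refine ⟨c₁, hc₁, c₂, hc₂, fun y hy r hr hrπ => ?_⟩
  have ht : arccos y ∈ Icc 0 (π / 2) := ⟨arccos_nonneg y, arccos_le_pi_div_two.2 hy.1⟩
  rw [arccos_ball_eq_Icc_cos (arccos_nonneg y) (arccos_le_pi y) hr.le]
  exact ⟨hlower _ ht r hr hrπ, hupper _ ht r hr hrπ⟩
end

section
/- Let ε > 0 and θ ∈ (0, π/2] with (2π/ε)·n^{-1} ≤ θ. Then for every integer n ≥ 1 with εn ≥ 2π/θ, ∑_{k=n}^{n+⌊εn⌋} cos²(kθ + b) ≥ εn/4 for any real constant b. -/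
/-!
Writing cos² x = 1/2 + cos (2x)/2, the sum over the ⌊εn⌋ + 1 > εn indices is half their number
plus half a sum of cosines in arithmetic progression with step 2θ. Telescoping against 2 sin θ
bounds the latter below by -1/sin θ, and Jordan's inequality sin θ ≥ 2θ/π together with
εn ≥ 2π/θ makes this error at most εn/4.
-/

open Real Finset

lemma sum_range_cos_mul_two_sin (a d : ℝ) (m : ℕ) :
    (∑ j ∈ range m, cos (a + j * d)) * (2 * sin (d / 2)) =
      sin (a + m * d - d / 2) - sin (a - d / 2) := by
  induction m with
  | zero => simp
  | succ m ih =>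
    rw [sum_range_succ, add_mul, ih]
    have hnext : a + ((m + 1 : ℕ) : ℝ) * d - d / 2 = (a + m * d) + d / 2 := by push_cast; ring
    have hprev : a + (m : ℝ) * d - d / 2 = (a + m * d) - d / 2 := by ring
    rw [hnext, hprev, sin_add, sin_sub]
    ring

lemma neg_inv_sin_le_sum_range_cos {a d : ℝ} (hd : 0 < sin (d / 2)) (m : ℕ) :
    -(sin (d / 2))⁻¹ ≤ ∑ j ∈ range m, cos (a + j * d) := by
  have htele := sum_range_cos_mul_two_sin a d m
  have hlow : -2 ≤ (∑ j ∈ range m, cos (a + j * d)) * (2 * sin (d / 2)) := by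
    rw [htele]
    linarith [neg_one_le_sin (a + m * d - d / 2), sin_le_one (a - d / 2)]
  rw [neg_le, inv_eq_one_div, le_div_iff₀ hd]
  linarith

lemma sum_Icc_cos_sq_eq (n m : ℕ) (θ b : ℝ) :
    ∑ k ∈ Icc n (n + m), cos (k * θ + b) ^ 2 =
      (m + 1) / 2 + (∑ j ∈ range (m + 1), cos ((2 * n * θ + 2 * b) + j * (2 * θ))) / 2 := by
  rw [← Ico_add_one_right_eq_Icc, sum_Ico_eq_sum_range, show n + m + 1 - n = m + 1 by omega]
  have hterm : ∀ j ∈ range (m + 1), cos (((n + j : ℕ) : ℝ) * θ + b) ^ 2 =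
      1 / 2 + cos ((2 * n * θ + 2 * b) + j * (2 * θ)) / 2 := by
    intro j _
    rw [cos_sq]
    push_cast
    ring_nf
  rw [sum_congr rfl hterm, sum_add_distrib, sum_const, card_range, ← sum_div, nsmul_eq_mul]
  push_cast
  ring

lemma sum_Icc_cos_sq_ge {θ : ℝ} (hθ : 0 < sin θ) (n m : ℕ) (b : ℝ) :
    (m + 1) / 2 - (sin θ)⁻¹ / 2 ≤ ∑ k ∈ Icc n (n + m), cos (k * θ + b) ^ 2 := by
  have hsin : 0 < sin (2 * θ / 2) := by rwa [mul_div_cancel_left₀ θ two_ne_zero]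
  have hcos := neg_inv_sin_le_sum_range_cos (a := 2 * n * θ + 2 * b) hsin (m + 1)
  rw [mul_div_cancel_left₀ θ two_ne_zero] at hcos
  rw [sum_Icc_cos_sq_eq]
  linarith

theorem stmt3_general (ε : ℝ) (θ : ℝ) (hθ0 : 0 < θ) (hθ1 : θ ≤ π / 2)
    (n : ℕ) (hbig : 2 * π / θ ≤ ε * (n : ℝ)) (b : ℝ) :
    ε * (n : ℝ) / 4 ≤
      ∑ k ∈ Finset.Icc n (n + ⌊ε * (n : ℝ)⌋₊), Real.cos ((k : ℝ) * θ + b) ^ 2 := by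
  have hjordan : 2 / π * θ ≤ sin θ := mul_le_sin hθ0.le hθ1
  have hsin : 0 < sin θ := lt_of_lt_of_le (by positivity) hjordan
  have hinv : (sin θ)⁻¹ ≤ π / (2 * θ) := by
    rw [inv_le_comm₀ hsin (by positivity), inv_div]
    exact (div_mul_eq_mul_div 2 π θ).symm.le.trans hjordan
  have hεn : π / (2 * θ) ≤ ε * n / 4 := by
    rw [div_le_iff₀ hθ0] at hbig
    rw [div_le_iff₀ (by positivity)]
    nlinarith
  have hfloor : ε * n < ⌊ε * (n : ℝ)⌋₊ + 1 := Nat.lt_floor_add_one _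
  linarith [sum_Icc_cos_sq_ge hsin n ⌊ε * (n : ℝ)⌋₊ b]

theorem stmt3 (ε : ℝ) (hε : 0 < ε) (θ : ℝ) (hθ0 : 0 < θ) (hθ1 : θ ≤ π / 2)
    (n : ℕ) (hn : 1 ≤ n) (hlow : 2 * π / ε * ((n : ℝ))⁻¹ ≤ θ)
    (hbig : 2 * π / θ ≤ ε * (n : ℝ)) (b : ℝ) :
    ε * (n : ℝ) / 4 ≤
      ∑ k ∈ Finset.Icc n (n + ⌊ε * (n : ℝ)⌋₊), Real.cos ((k : ℝ) * θ + b) ^ 2 :=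
  stmt3_general ε θ hθ0 hθ1 n hbig b
end

section
/- Let α ≥ β > -1/2, w(x) = (1-x)^α(1+x)^β, ξ ∈ [0,1], j ≥ 0, and for m ≥ 0 set J_m = B_ξ(c₂(2^m+1)2^{-j}) in the arccos metric. Let η ∈ [-1,1] with c₂2^{m-1}2^{-j} < d(η,ξ) ≤ c₂2^m2^{-j} (for m ≥ 1), and let I_η ⊂ [-1,1] be an interval with B_η(c₁2^{-j}) ⊂ I_η. Then μ(J_m) ≤ c 2^{m(4α+3)} μ(I_η), where μ(E) = ∫_E w dx and c depends only on α, β, c₁, c₂. -/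
open Real MeasureTheory


lemma myArccosAnti {x y : ℝ} (h : x ≤ y) : Real.arccos y ≤ Real.arccos x := by
  unfold Real.arccos
  have := Real.monotone_arcsin h
  linarith

lemma myBallEq (θ R : ℝ) (hθ0 : 0 ≤ θ) (hθπ : θ ≤ π) (hR : 0 ≤ R) :
    {x ∈ Set.Icc (-1:ℝ) 1 | |Real.arccos x - θ| ≤ R}
      = Set.Icc (Real.cos (min π (θ+R))) (Real.cos (max 0 (θ-R))) := by
  ext x
  simp only [Set.mem_setOf_eq, Set.mem_Icc, abs_le]
  constructor
  · rintro ⟨⟨hx1, hx2⟩, h1, h2⟩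
    have ha0 := Real.arccos_nonneg x
    have haπ := Real.arccos_le_pi x
    constructor
    · have h3 : min π (θ+R) ≤ π := min_le_left _ _
      have h4 : Real.arccos x ≤ min π (θ+R) := le_min haπ (by linarith)
      have := Real.cos_le_cos_of_nonneg_of_le_pi ha0 h3 h4
      rwa [Real.cos_arccos hx1 hx2] at this
    · have h3 : (0:ℝ) ≤ max 0 (θ-R) := le_max_left _ _
      have h4 : max 0 (θ-R) ≤ Real.arccos x := max_le ha0 (by linarith)
      have := Real.cos_le_cos_of_nonneg_of_le_pi h3 haπ h4
      rwa [Real.cos_arccos hx1 hx2] at this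
  · rintro ⟨h1, h2⟩
    have hx1 : (-1:ℝ) ≤ x := le_trans (Real.neg_one_le_cos _) h1
    have hx2 : x ≤ 1 := le_trans h2 (Real.cos_le_one _)
    refine ⟨⟨hx1, hx2⟩, ?_, ?_⟩
    · have := myArccosAnti h2
      rw [Real.arccos_cos (le_max_left _ _) (by
        rcases le_total (θ - R) 0 with h | h
        · simp [max_eq_left h, Real.pi_nonneg]
        · rw [max_eq_right h]; linarith)] at this
      have h5 : θ - R ≤ max 0 (θ-R) := le_max_right _ _
      linarith
    · have := myArccosAnti h1
      rw [Real.arccos_cos (le_min Real.pi_nonneg (by linarith)) (min_le_left _ _)] at this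
      have h5 : min π (θ+R) ≤ θ + R := min_le_right _ _
      linarith


lemma myCosImage (u v : ℝ) (hu : 0 ≤ u) (hv : v ≤ π) (huv : u ≤ v) :
    Real.cos '' Set.Icc u v = Set.Icc (Real.cos v) (Real.cos u) := by
  apply Set.Subset.antisymm
  · rintro _ ⟨θ, ⟨hθ1, hθ2⟩, rfl⟩
    exact ⟨Real.cos_le_cos_of_nonneg_of_le_pi (hu.trans hθ1) hv hθ2,
      Real.cos_le_cos_of_nonneg_of_le_pi hu (hθ2.trans hv) hθ1⟩
  · rintro y ⟨h1, h2⟩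
    have hy1 : (-1:ℝ) ≤ y := le_trans (Real.neg_one_le_cos _) h1
    have hy2 : y ≤ 1 := le_trans h2 (Real.cos_le_one _)
    refine ⟨Real.arccos y, ⟨?_, ?_⟩, Real.cos_arccos hy1 hy2⟩
    · have := myArccosAnti h2
      rwa [Real.arccos_cos hu (huv.trans hv)] at this
    · have := myArccosAnti h1
      rwa [Real.arccos_cos (hu.trans huv) hv] at this

lemma myCOV (α β u v : ℝ) (hu : 0 ≤ u) (hv : v ≤ π) (huv : u ≤ v) :
    ∫ x in Set.Icc (Real.cos v) (Real.cos u), (1 - x) ^ α * (1 + x) ^ β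
      = ∫ θ in Set.Icc u v, Real.sin θ * ((1 - Real.cos θ) ^ α * (1 + Real.cos θ) ^ β) := by
  rw [← myCosImage u v hu hv huv]
  rw [integral_image_eq_integral_abs_deriv_smul measurableSet_Icc
    (fun θ _ => (Real.hasDerivAt_cos θ).hasDerivWithinAt)
    (Real.injOn_cos.mono (Set.Icc_subset_Icc hu hv))
    (fun x => (1 - x) ^ α * (1 + x) ^ β)]
  apply setIntegral_congr_fun measurableSet_Icc
  intro θ ⟨hθ1, hθ2⟩
  have : |(-Real.sin θ)| = Real.sin θ := by
    rw [abs_neg, abs_of_nonneg (Real.sin_nonneg_of_nonneg_of_le_pi (hu.trans hθ1) (hθ2.trans hv))]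
  show |(-Real.sin θ)| • ((1 - Real.cos θ) ^ α * (1 + Real.cos θ) ^ β) = _
  rw [this, smul_eq_mul]


lemma myGEq (α β θ : ℝ) (hp : (0:ℝ) < 2*α+1) (hq : (0:ℝ) < 2*β+1)
    (hθ0 : 0 ≤ θ) (hθπ : θ ≤ π) :
    Real.sin θ * ((1 - Real.cos θ) ^ α * (1 + Real.cos θ) ^ β)
      = 2 ^ (α+β+1) * (Real.sin (θ/2) ^ (2*α+1) * Real.cos (θ/2) ^ (2*β+1)) := by
  rcases eq_or_lt_of_le hθ0 with h0 | h0
  · rw [← h0]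
    simp [Real.zero_rpow (ne_of_gt hp)]
  rcases eq_or_lt_of_le hθπ with hπ | hπ
  · rw [hπ]
    simp [Real.zero_rpow (ne_of_gt hq)]
  have hs : 0 < Real.sin (θ/2) :=
    Real.sin_pos_of_pos_of_lt_pi (by linarith) (by linarith [Real.pi_pos])
  have hc : 0 < Real.cos (θ/2) :=
    Real.cos_pos_of_mem_Ioo ⟨by linarith [Real.pi_pos], by linarith⟩
  have e1 : Real.cos θ = Real.cos (θ/2)^2 - Real.sin (θ/2)^2 := by
    have := Real.cos_two_mul' (θ/2); rwa [show 2*(θ/2) = θ by ring] at this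
  have epyth := Real.sin_sq_add_cos_sq (θ/2)
  have e2 : Real.sin θ = 2 * Real.sin (θ/2) * Real.cos (θ/2) := by
    have := Real.sin_two_mul (θ/2); rwa [show 2*(θ/2) = θ by ring] at this
  have h1 : 1 - Real.cos θ = 2 * Real.sin (θ/2)^2 := by rw [e1]; nlinarith
  have h2 : 1 + Real.cos θ = 2 * Real.cos (θ/2)^2 := by rw [e1]; nlinarith
  have e3 : (1 - Real.cos θ)^α = 2^α * Real.sin (θ/2) ^ (2*α) := by
    rw [h1, Real.mul_rpow (by norm_num) (sq_nonneg _)]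
    congr 1
    rw [← Real.rpow_natCast (Real.sin (θ/2)) 2, ← Real.rpow_mul hs.le]
    norm_num
  have e4 : (1 + Real.cos θ)^β = 2^β * Real.cos (θ/2) ^ (2*β) := by
    rw [h2, Real.mul_rpow (by norm_num) (sq_nonneg _)]
    congr 1
    rw [← Real.rpow_natCast (Real.cos (θ/2)) 2, ← Real.rpow_mul hc.le]
    norm_num
  have e5 : (2:ℝ)^(α+β+1) = 2^α * 2^β * 2 := by
    rw [Real.rpow_add two_pos (α+β) 1, Real.rpow_add two_pos α β, Real.rpow_one]
  have e6 : Real.sin (θ/2) ^ (2*α+1) = Real.sin (θ/2) ^ (2*α) * Real.sin (θ/2) :=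
    Real.rpow_add_one hs.ne' (2*α)
  have e7 : Real.cos (θ/2) ^ (2*β+1) = Real.cos (θ/2) ^ (2*β) * Real.cos (θ/2) :=
    Real.rpow_add_one hc.ne' (2*β)
  rw [e2, e3, e4, e5, e6, e7]
  ring

lemma myGUpper (α β θ : ℝ) (hp : (0:ℝ) < 2*α+1) (hq : (0:ℝ) < 2*β+1)
    (hθ0 : 0 ≤ θ) (hθπ : θ ≤ π) :
    Real.sin θ * ((1 - Real.cos θ) ^ α * (1 + Real.cos θ) ^ β)
      ≤ 2 ^ (α+β+1) * (θ ^ (2*α+1) * (π-θ) ^ (2*β+1)) := by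
  rw [myGEq α β θ hp hq hθ0 hθπ]
  have hs0 : 0 ≤ Real.sin (θ/2) := Real.sin_nonneg_of_nonneg_of_le_pi (by linarith)
    (by linarith [Real.pi_pos])
  have hsθ : Real.sin (θ/2) ≤ θ := (Real.sin_le (by linarith)).trans (by linarith)
  have hceq : Real.cos (θ/2) = Real.sin ((π-θ)/2) := by
    rw [show (π-θ)/2 = π/2 - θ/2 by ring, Real.sin_pi_div_two_sub]
  have hc0 : 0 ≤ Real.cos (θ/2) := by
    rw [hceq]; exact Real.sin_nonneg_of_nonneg_of_le_pi (by linarith) (by linarith [Real.pi_pos])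
  have hcθ : Real.cos (θ/2) ≤ π - θ := by
    rw [hceq]; exact (Real.sin_le (by linarith)).trans (by linarith)
  have h1 := Real.rpow_le_rpow hs0 hsθ hp.le
  have h2 := Real.rpow_le_rpow hc0 hcθ hq.le
  exact mul_le_mul_of_nonneg_left
    (mul_le_mul h1 h2 (Real.rpow_nonneg hc0 _) (Real.rpow_nonneg hθ0 _))
    (Real.rpow_nonneg (by norm_num) _)

lemma myGLower (α β θ : ℝ) (hp : (0:ℝ) < 2*α+1) (hq : (0:ℝ) < 2*β+1)
    (hθ0 : 0 ≤ θ) (hθπ : θ ≤ π) :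
    2 ^ (α+β+1) * ((θ/π) ^ (2*α+1) * ((π-θ)/π) ^ (2*β+1))
      ≤ Real.sin θ * ((1 - Real.cos θ) ^ α * (1 + Real.cos θ) ^ β) := by
  rw [myGEq α β θ hp hq hθ0 hθπ]
  have hπ := Real.pi_pos
  have hθπ' : θ/π ≤ Real.sin (θ/2) := by
    have := Real.mul_le_sin (x := θ/2) (by linarith) (by linarith)
    calc θ/π = 2/π * (θ/2) := by field_simp
    _ ≤ _ := this
  have hceq : Real.cos (θ/2) = Real.sin ((π-θ)/2) := by
    rw [show (π-θ)/2 = π/2 - θ/2 by ring, Real.sin_pi_div_two_sub]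
  have hcθ' : (π-θ)/π ≤ Real.cos (θ/2) := by
    rw [hceq]
    have := Real.mul_le_sin (x := (π-θ)/2) (by linarith) (by linarith)
    calc (π-θ)/π = 2/π * ((π-θ)/2) := by field_simp
    _ ≤ _ := this
  have hs0 : 0 ≤ Real.sin (θ/2) := Real.sin_nonneg_of_nonneg_of_le_pi (by linarith)
    (by linarith)
  have hd1 : (0:ℝ) ≤ θ/π := by positivity
  have hd2 : (0:ℝ) ≤ (π-θ)/π := by
    apply div_nonneg (by linarith) hπ.le
  have h1 := Real.rpow_le_rpow hd1 hθπ' hp.le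
  have h2 := Real.rpow_le_rpow hd2 hcθ' hq.le
  exact mul_le_mul_of_nonneg_left
    (mul_le_mul h1 h2 (Real.rpow_nonneg hd2 _)
      (Real.rpow_nonneg hs0 _))
    (Real.rpow_nonneg (by norm_num) _)


lemma myGMeas (α β : ℝ) :
    Measurable (fun θ : ℝ => Real.sin θ * ((1 - Real.cos θ) ^ α * (1 + Real.cos θ) ^ β)) := by
  apply Real.measurable_sin.mul
  exact ((Real.measurable_cos.const_sub 1).pow measurable_const).mul
    ((Real.measurable_cos.const_add 1).pow measurable_const)

lemma myGInt (α β : ℝ) (hp : (0:ℝ) < 2*α+1) (hq : (0:ℝ) < 2*β+1) :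
    IntegrableOn (fun θ : ℝ => Real.sin θ * ((1 - Real.cos θ) ^ α * (1 + Real.cos θ) ^ β))
      (Set.Icc 0 π) := by
  apply Measure.integrableOn_of_bounded (M := 2 ^ (α+β+1) * (π ^ (2*α+1) * π ^ (2*β+1)))
  · rw [Real.volume_Icc]; exact ENNReal.ofReal_ne_top
  · exact (myGMeas α β).aestronglyMeasurable
  · rw [ae_restrict_iff' measurableSet_Icc]
    filter_upwards with θ
    rintro ⟨hθ0, hθπ⟩
    have h0 : 0 ≤ Real.sin θ * ((1 - Real.cos θ) ^ α * (1 + Real.cos θ) ^ β) := by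
      apply mul_nonneg (Real.sin_nonneg_of_nonneg_of_le_pi hθ0 hθπ)
      exact mul_nonneg (Real.rpow_nonneg (by nlinarith [Real.cos_le_one θ]) _)
        (Real.rpow_nonneg (by nlinarith [Real.neg_one_le_cos θ]) _)
    rw [Real.norm_eq_abs, abs_of_nonneg h0]
    refine (myGUpper α β θ hp hq hθ0 hθπ).trans ?_
    have hπ := Real.pi_pos
    have h1 := Real.rpow_le_rpow hθ0 hθπ hp.le
    have h2 := Real.rpow_le_rpow (by linarith : (0:ℝ) ≤ π - θ) (by linarith : π - θ ≤ π) hq.le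
    exact mul_le_mul_of_nonneg_left
      (mul_le_mul h1 h2 (Real.rpow_nonneg (by linarith) _) (Real.rpow_nonneg hπ.le _))
      (Real.rpow_nonneg (by norm_num) _)

set_option maxHeartbeats 1000000

theorem stmt17 (α β : ℝ) (hαβ : α ≥ β) (hβ : β > -(1/2))
    (c₁ c₂ : ℝ) (hc₁ : 0 < c₁) (hc₂ : 0 < c₂) :
    ∃ c > (0:ℝ), ∀ j m : ℕ, 1 ≤ m → ∀ ξ ∈ Set.Icc (0:ℝ) 1, ∀ η ∈ Set.Icc (-1:ℝ) 1,
      c₂ * ((2:ℝ) ^ m / 2) * (2:ℝ) ^ (-(j:ℤ)) < |Real.arccos η - Real.arccos ξ| →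
      |Real.arccos η - Real.arccos ξ| ≤ c₂ * (2:ℝ) ^ m * (2:ℝ) ^ (-(j:ℤ)) →
      ∀ a b : ℝ,
        {x ∈ Set.Icc (-1:ℝ) 1 |
            |Real.arccos x - Real.arccos η| ≤ c₁ * (2:ℝ) ^ (-(j:ℤ))} ⊆ Set.Icc a b →
        Set.Icc a b ⊆ Set.Icc (-1:ℝ) 1 →
        (∫ x in {x ∈ Set.Icc (-1:ℝ) 1 |
            |Real.arccos x - Real.arccos ξ| ≤ c₂ * ((2:ℝ) ^ m + 1) * (2:ℝ) ^ (-(j:ℤ))},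
          (1 - x) ^ α * (1 + x) ^ β)
        ≤ c * (2:ℝ) ^ ((m : ℝ) * (4*α+3)) *
            ∫ x in Set.Icc a b, (1 - x) ^ α * (1 + x) ^ β := by
  have hπ := Real.pi_pos
  have hp : (0:ℝ) < 2*α+1 := by linarith
  have hq : (0:ℝ) < 2*β+1 := by linarith
  set K2 : ℝ := 2 ^ (α+β+1) with hK2def
  have hK2pos : 0 < K2 := Real.rpow_pos_of_pos two_pos _
  set A : ℝ := max (6*c₂/c₁) 24 with hAdef
  have hA24 : (24:ℝ) ≤ A := le_max_right _ _
  have hApos : 0 < A := by linarith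
  have hAc : 6*c₂/c₁ ≤ A := le_max_left _ _
  have hAc' : 6*c₂ ≤ A * c₁ := by
    have := mul_le_mul_of_nonneg_right hAc hc₁.le
    rwa [div_mul_cancel₀] at this
    exact hc₁.ne'
  refine ⟨4*A*((5*A*π) ^ (2*α+1))*((5*A*π) ^ (2*β+1)), by positivity, ?_⟩
  intro j m hm ξ hξ η hη h1 h2 a b hBab hab
  set δ : ℝ := (2:ℝ)^(-(j:ℤ)) with hδdef
  have hδ : 0 < δ := by positivity
  set θξ := Real.arccos ξ with hθξdef
  set θη := Real.arccos η with hθηdef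
  have hθξ0 : 0 ≤ θξ := Real.arccos_nonneg ξ
  have hθξπ2 : θξ ≤ π/2 := Real.arccos_le_pi_div_two.mpr hξ.1
  have hθξπ : θξ ≤ π := Real.arccos_le_pi ξ
  have hθη0 : 0 ≤ θη := Real.arccos_nonneg η
  have hθηπ : θη ≤ π := Real.arccos_le_pi η
  have h2m1 : (1:ℝ) ≤ 2^m := one_le_pow₀ (by norm_num)
  have h2m2 : (2:ℝ) ≤ 2^m := le_self_pow₀ (by norm_num) (by omega)
  set r : ℝ := c₂ * 2^m * δ with hrdef
  set R : ℝ := c₂ * (2^m + 1) * δ with hRdef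
  set ρ : ℝ := c₁ * δ with hρdef
  set ρ' : ℝ := min ρ (π/4) with hρ'def
  have hr : 0 < r := by positivity
  have hR : 0 < R := by positivity
  have hρ : 0 < ρ := by positivity
  have hρ' : 0 < ρ' := lt_min hρ (by positivity)
  have hρ'ρ : ρ' ≤ ρ := min_le_left _ _
  have hρ'π : ρ' ≤ π/4 := min_le_right _ _
  have hd1 : r/2 < |θη - θξ| := by
    calc r/2 = c₂ * (2^m/2) * δ := by ring
    _ < |θη - θξ| := h1
  have hd2 : |θη - θξ| ≤ r := h2
  have hdabs : |θη - θξ| ≤ π := abs_le.mpr ⟨by linarith, by linarith⟩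
  have hrπ : r < 2*π := by linarith
  have hRr : R ≤ 2*r := by
    have e : 2*r - R = c₂ * ((2^m - 1) * δ) := by rw [hRdef, hrdef]; ring
    have h1' : 0 ≤ c₂ * ((2^m - 1) * δ) :=
      mul_nonneg hc₂.le (mul_nonneg (by linarith) hδ.le)
    linarith
  have hηθξ : θξ ≤ θη + r := by
    have : θξ - θη ≤ |θη - θξ| := by rw [abs_sub_comm]; exact le_abs_self _
    linarith
  have hηθξ' : θη ≤ θξ + r := by
    have : θη - θξ ≤ |θη - θξ| := le_abs_self _
    linarith
  set E : ℝ := A * 2^m with hEdef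
  have hE0 : 0 < E := by positivity
  have hE1 : 1 ≤ E := by
    have h1' : (24:ℝ) * 1 ≤ A * 2^m :=
      mul_le_mul hA24 h2m1 (by norm_num) (by linarith)
    have h2' : E = A * 2^m := hEdef
    linarith
  -- F1 : r + R ≤ E * ρ'
  have hF1 : r + R ≤ E * ρ' := by
    have h3r : r + R ≤ 3*r := by linarith
    have hXpos : (0:ℝ) ≤ 2^m * δ := by positivity
    rcases le_total ρ (π/4) with hcase | hcase
    · have hρ'eq : ρ' = ρ := min_eq_left hcase
      have e1 : E * ρ' = (A*c₁) * (2^m * δ) := by rw [hρ'eq, hEdef, hρdef]; ring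
      have e2 : (6*c₂) * (2^m * δ) ≤ (A*c₁) * (2^m * δ) :=
        mul_le_mul_of_nonneg_right hAc' hXpos
      have e3 : 3*r ≤ (6*c₂) * (2^m * δ) := by
        have e3' : (6*c₂) * (2^m * δ) - 3*r = 3 * (c₂ * (2^m * δ)) := by rw [hrdef]; ring
        have : 0 ≤ c₂ * (2^m * δ) := by positivity
        linarith
      rw [e1]; linarith
    · have hρ'eq : ρ' = π/4 := min_eq_right hcase
      have e1 : E * ρ' = (A * 2^m) * (π/4) := by rw [hρ'eq, hEdef]
      rw [e1]
      have h48 : (48:ℝ) ≤ A * 2^m := by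
        have := mul_le_mul hA24 h2m2 (by norm_num : (0:ℝ) ≤ 2) (by linarith : (0:ℝ) ≤ A)
        linarith
      have h48' : 48 * (π/4) ≤ (A * 2^m) * (π/4) :=
        mul_le_mul_of_nonneg_right h48 (by positivity)
      linarith
  have hEmul : ∀ z : ℝ, 0 ≤ z → z + E * ρ' ≤ E * (z + ρ') := by
    intro z hz
    have h1' : 0 ≤ (E - 1) * z := mul_nonneg (by linarith) hz
    have h2' : E * (z + ρ') = z + E * ρ' + (E - 1) * z := by ring
    linarith
  have hF3 : θξ + R ≤ E * (θη + ρ') := by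
    have := hEmul θη hθη0
    linarith
  have hF4 : (π - θξ) + R ≤ E * ((π - θη) + ρ') := by
    have := hEmul (π - θη) (by linarith)
    linarith
  -- the ball J
  set u1 : ℝ := max 0 (θξ - R) with hu1def
  set v1 : ℝ := min π (θξ + R) with hv1def
  have hu1v1 : u1 ≤ v1 := max_le (le_min hπ.le (by linarith)) (le_min (by linarith) (by linarith))
  have hu10 : 0 ≤ u1 := le_max_left _ _
  have hv1π : v1 ≤ π := min_le_left _ _
  have hv1ξ : v1 ≤ θξ + R := min_le_right _ _
  have hu1ξ : θξ - R ≤ u1 := le_max_right _ _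
  have hJ := myBallEq θξ R hθξ0 hθξπ hR.le
  -- the ball around η
  set u2 : ℝ := max 0 (θη - ρ) with hu2def
  set v2 : ℝ := min π (θη + ρ) with hv2def
  have hu2v2 : u2 ≤ v2 := max_le (le_min hπ.le (by linarith)) (le_min (by linarith) (by linarith))
  have hu20 : 0 ≤ u2 := le_max_left _ _
  have hu2η : u2 ≤ θη := max_le hθη0 (by linarith)
  have hv2π : v2 ≤ π := min_le_left _ _
  have hηv2 : θη ≤ v2 := le_min hθηπ (by linarith)
  have hB := myBallEq θη ρ hθη0 hθηπ hρ.le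
  rw [hB] at hBab
  have hcs : Real.cos v2 ≤ Real.cos u2 :=
    Real.cos_le_cos_of_nonneg_of_le_pi hu20 hv2π hu2v2
  have hacos : a ≤ Real.cos v2 := (hBab ⟨le_refl _, hcs⟩).1
  have hbcos : Real.cos u2 ≤ b := (hBab ⟨hcs, le_refl _⟩).2
  have hab' : a ≤ b := le_trans hacos (le_trans hcs hbcos)
  have ha1 : -1 ≤ a := (hab ⟨le_refl a, hab'⟩).1
  have hb1 : b ≤ 1 := (hab ⟨hab', le_refl b⟩).2
  have ha2 : a ≤ 1 := hab'.trans hb1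
  have hbm1 : -1 ≤ b := ha1.trans hab'
  set u' : ℝ := Real.arccos b with hu'def
  set v' : ℝ := Real.arccos a with hv'def
  have hu'0 : 0 ≤ u' := Real.arccos_nonneg b
  have hv'π : v' ≤ π := Real.arccos_le_pi a
  have hu'v' : u' ≤ v' := myArccosAnti hab'
  have hcosv' : Real.cos v' = a := Real.cos_arccos ha1 ha2
  have hcosu' : Real.cos u' = b := Real.cos_arccos hbm1 hb1
  have hu2π : u2 ≤ π := max_le hπ.le (by linarith)
  have hu'u2 : u' ≤ u2 := by
    have := myArccosAnti hbcos
    rwa [Real.arccos_cos hu20 hu2π] at this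
  have hv2v' : v2 ≤ v' := by
    have := myArccosAnti hacos
    rwa [Real.arccos_cos (hu20.trans hu2v2) hv2π] at this
  -- choose the test interval [t, t + ρ'/2]
  obtain ⟨t, ht1, ht2, ht3, ht4⟩ :
      ∃ t, u2 ≤ t ∧ t + ρ'/2 ≤ v2 ∧ (θη + ρ')/5 ≤ t ∧
        ((π - θη) + ρ')/5 ≤ π - (t + ρ'/2) := by
    rcases le_total θη (π/2) with hcase | hcase
    · refine ⟨θη + ρ'/2, by linarith, ?_, by linarith, ?_⟩
      · exact le_min (by linarith) (by linarith)
      · linarith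
    · refine ⟨θη - ρ', ?_, ?_, by linarith, by linarith⟩
      · exact max_le (by linarith) (by linarith)
      · exact le_min (by linarith) (by linarith)
  set X : ℝ := (θη + ρ')/5 with hXdef
  set Y : ℝ := ((π - θη) + ρ')/5 with hYdef
  have hX0 : 0 < X := by rw [hXdef]; positivity
  have hY0 : 0 < Y := by
    rw [hYdef]
    have : 0 ≤ π - θη := by linarith
    positivity
  -- notation for the weight function in angle coordinates
  set G : ℝ → ℝ := fun θ => Real.sin θ * ((1 - Real.cos θ) ^ α * (1 + Real.cos θ) ^ β) with hGdef
  have hGnonneg : ∀ θ ∈ Set.Icc (0:ℝ) π, 0 ≤ G θ := by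
    intro θ ⟨hθ0, hθπ⟩
    apply mul_nonneg (Real.sin_nonneg_of_nonneg_of_le_pi hθ0 hθπ)
    exact mul_nonneg (Real.rpow_nonneg (sub_nonneg.mpr (Real.cos_le_one θ)) _)
      (Real.rpow_nonneg (by linarith [Real.neg_one_le_cos θ]) _)
  have hGint : IntegrableOn G (Set.Icc 0 π) := myGInt α β hp hq
  -- rewrite the LHS integral
  rw [hJ, myCOV α β u1 v1 hu10 hv1π hu1v1]
  -- rewrite the RHS integral
  have hIab : (∫ x in Set.Icc a b, (1 - x) ^ α * (1 + x) ^ β)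
      = ∫ θ in Set.Icc u' v', G θ := by
    rw [← hcosv', ← hcosu', myCOV α β u' v' hu'0 hv'π hu'v']
  rw [hIab]
  -- upper bound for the LHS
  set M : ℝ := K2 * ((θξ+R) ^ (2*α+1) * ((π-θξ)+R) ^ (2*β+1)) with hMdef
  have hM0 : 0 ≤ M := by
    apply mul_nonneg hK2pos.le
    exact mul_nonneg (Real.rpow_nonneg (by linarith) _) (Real.rpow_nonneg (by linarith) _)
  have hupper : (∫ θ in Set.Icc u1 v1, G θ) ≤ M * (2*R) := by
    have hbound : ∀ θ ∈ Set.Icc u1 v1, ‖G θ‖ ≤ M := by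
      intro θ ⟨hθ1, hθ2⟩
      have hθ0 : 0 ≤ θ := hu10.trans hθ1
      have hθπ : θ ≤ π := hθ2.trans hv1π
      rw [Real.norm_eq_abs, abs_of_nonneg (hGnonneg θ ⟨hθ0, hθπ⟩)]
      refine (myGUpper α β θ hp hq hθ0 hθπ).trans ?_
      rw [hMdef]
      have e1 : θ ^ (2*α+1) ≤ (θξ+R) ^ (2*α+1) :=
        Real.rpow_le_rpow hθ0 (by linarith) hp.le
      have e2 : (π-θ) ^ (2*β+1) ≤ ((π-θξ)+R) ^ (2*β+1) :=
        Real.rpow_le_rpow (by linarith) (by linarith [hu1ξ, hθ1]) hq.le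
      exact mul_le_mul_of_nonneg_left
        (mul_le_mul e1 e2 (Real.rpow_nonneg (by linarith) _)
          (Real.rpow_nonneg (by linarith) _)) hK2pos.le
    have hvol : volume (Set.Icc u1 v1) < ⊤ := by
      rw [Real.volume_Icc]; exact ENNReal.ofReal_lt_top
    have := norm_setIntegral_le_of_norm_le_const hvol hbound
    rw [Real.norm_eq_abs] at this
    have h5 := (le_abs_self _).trans this
    have hvol2 : (volume (Set.Icc u1 v1)).toReal = v1 - u1 := by
      rw [Real.volume_Icc, ENNReal.toReal_ofReal (by linarith)]
    rw [measureReal_def, hvol2] at h5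
    refine h5.trans ?_
    have : v1 - u1 ≤ 2*R := by linarith
    exact mul_le_mul_of_nonneg_left this hM0
  -- lower bound for the RHS
  set cLB : ℝ := K2 * ((X/π) ^ (2*α+1) * (Y/π) ^ (2*β+1)) with hcLBdef
  have hcLB0 : 0 ≤ cLB := by
    apply mul_nonneg hK2pos.le
    exact mul_nonneg (Real.rpow_nonneg (by positivity) _) (Real.rpow_nonneg (by positivity) _)
  have hTsub : Set.Icc t (t + ρ'/2) ⊆ Set.Icc u' v' :=
    Set.Icc_subset_Icc (hu'u2.trans ht1) (ht2.trans hv2v')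
  have hT0π : Set.Icc t (t + ρ'/2) ⊆ Set.Icc 0 π :=
    Set.Icc_subset_Icc (hu'0.trans (hu'u2.trans ht1)) (by linarith [ht4, hY0])
  have hu'v'0π : Set.Icc u' v' ⊆ Set.Icc 0 π := Set.Icc_subset_Icc hu'0 hv'π
  have ht0 : 0 ≤ t := le_trans hu20 ht1
  have hlow : cLB * (ρ'/2) ≤ ∫ θ in Set.Icc u' v', G θ := by
    have hpt : ∀ θ ∈ Set.Icc t (t + ρ'/2), cLB ≤ G θ := by
      intro θ ⟨hθ1, hθ2⟩
      have hθ0 : 0 ≤ θ := ht0.trans hθ1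
      have hθπ : θ ≤ π := by
        have := hT0π ⟨hθ1, hθ2⟩; exact this.2
      refine le_trans ?_ (myGLower α β θ hp hq hθ0 hθπ)
      rw [hcLBdef]
      have e1 : (X/π) ^ (2*α+1) ≤ (θ/π) ^ (2*α+1) := by
        apply Real.rpow_le_rpow (by positivity) _ hp.le
        apply div_le_div_of_nonneg_right _ hπ.le
        · linarith
      have e2 : (Y/π) ^ (2*β+1) ≤ ((π-θ)/π) ^ (2*β+1) := by
        apply Real.rpow_le_rpow (by positivity) _ hq.le
        apply div_le_div_of_nonneg_right _ hπ.le
        · linarith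
      exact mul_le_mul_of_nonneg_left
        (mul_le_mul e1 e2 (Real.rpow_nonneg (by positivity) _)
          (Real.rpow_nonneg (by positivity) _)) hK2pos.le
    have hvolT : (volume (Set.Icc t (t + ρ'/2))).toReal = ρ'/2 := by
      rw [Real.volume_Icc, ENNReal.toReal_ofReal (by linarith)]
      ring_nf
    have hs1 : cLB * (ρ'/2) ≤ ∫ θ in Set.Icc t (t + ρ'/2), G θ := by
      have := setIntegral_ge_of_const_le_real measurableSet_Icc
        (by rw [Real.volume_Icc]; exact ENNReal.ofReal_ne_top) hpt
        (hGint.mono_set hT0π)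
      rwa [measureReal_def, hvolT] at this
    refine hs1.trans ?_
    apply setIntegral_mono_set (hGint.mono_set hu'v'0π)
    · rw [Filter.EventuallyLE, ae_restrict_iff' measurableSet_Icc]
      filter_upwards with θ hθ
      exact hGnonneg θ (hu'v'0π hθ)
    · exact HasSubset.Subset.eventuallyLE hTsub
  -- the core numeric inequality
  have hXeq : θη + ρ' = 5 * X := by rw [hXdef]; ring
  have hYeq : (π - θη) + ρ' = 5 * Y := by rw [hYdef]; ring
  have hcore : M * (2*R) ≤
      (4*A*((5*A*π) ^ (2*α+1))*((5*A*π) ^ (2*β+1))) * 2 ^ ((m:ℝ)*(4*α+3)) * (cLB * (ρ'/2)) := by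
    have hstep1 : (θξ+R) ^ (2*α+1) ≤ ((5*E*π) * (X/π)) ^ (2*α+1) := by
      apply Real.rpow_le_rpow (by linarith) _ hp.le
      have : (5*E*π) * (X/π) = E * (5*X) := by field_simp
      rw [this, ← hXeq]; exact hF3
    have hstep2 : ((π-θξ)+R) ^ (2*β+1) ≤ ((5*E*π) * (Y/π)) ^ (2*β+1) := by
      apply Real.rpow_le_rpow (by linarith) _ hq.le
      have : (5*E*π) * (Y/π) = E * (5*Y) := by field_simp
      rw [this, ← hYeq]; exact hF4
    have hstepR : 2*R ≤ 4*E*(ρ'/2) := by linarith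
    have hsplit1 : ((5*E*π) * (X/π)) ^ (2*α+1) = (5*E*π) ^ (2*α+1) * (X/π) ^ (2*α+1) :=
      Real.mul_rpow (by positivity) (by positivity)
    have hsplit2 : ((5*E*π) * (Y/π)) ^ (2*β+1) = (5*E*π) ^ (2*β+1) * (Y/π) ^ (2*β+1) :=
      Real.mul_rpow (by positivity) (by positivity)
    have hmain : M * (2*R) ≤
        (4*E*((5*E*π) ^ (2*α+1))*((5*E*π) ^ (2*β+1))) * (cLB * (ρ'/2)) := by
      have l1 : M ≤ K2 * ((5*E*π) ^ (2*α+1) * (X/π) ^ (2*α+1) *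
          ((5*E*π) ^ (2*β+1) * (Y/π) ^ (2*β+1))) := by
        rw [hMdef, ← hsplit1, ← hsplit2]
        apply mul_le_mul_of_nonneg_left _ hK2pos.le
        exact mul_le_mul hstep1 hstep2 (Real.rpow_nonneg (by linarith) _)
          (Real.rpow_nonneg (by positivity) _)
      calc M * (2*R) ≤ (K2 * ((5*E*π) ^ (2*α+1) * (X/π) ^ (2*α+1) *
          ((5*E*π) ^ (2*β+1) * (Y/π) ^ (2*β+1)))) * (4*E*(ρ'/2)) := by
            apply mul_le_mul l1 hstepR (by linarith) _
            apply mul_nonneg hK2pos.le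
            positivity
      _ = (4*E*((5*E*π) ^ (2*α+1))*((5*E*π) ^ (2*β+1))) * (cLB * (ρ'/2)) := by
            rw [hcLBdef]; ring
    refine hmain.trans ?_
    apply mul_le_mul_of_nonneg_right _ (by positivity)
    -- 4*E*(5Eπ)^p*(5Eπ)^q ≤ c * 2^(m(4α+3))
    have hdecomp1 : (5*E*π) ^ (2*α+1) = (5*A*π) ^ (2*α+1) * ((2:ℝ)^m) ^ (2*α+1) := by
      rw [hEdef, show 5*(A*2^m)*π = (5*A*π) * 2^m by ring]
      exact Real.mul_rpow (by positivity) (by positivity)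
    have hdecomp2 : (5*E*π) ^ (2*β+1) = (5*A*π) ^ (2*β+1) * ((2:ℝ)^m) ^ (2*β+1) := by
      rw [hEdef, show 5*(A*2^m)*π = (5*A*π) * 2^m by ring]
      exact Real.mul_rpow (by positivity) (by positivity)
    have hexp : (2:ℝ)^m * ((2:ℝ)^m) ^ (2*α+1) * ((2:ℝ)^m) ^ (2*β+1)
        ≤ 2 ^ ((m:ℝ)*(4*α+3)) := by
      rw [← Real.rpow_natCast 2 m, ← Real.rpow_mul (by norm_num : (0:ℝ) ≤ 2),
        ← Real.rpow_mul (by norm_num : (0:ℝ) ≤ 2),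
        ← Real.rpow_add two_pos, ← Real.rpow_add two_pos]
      apply Real.rpow_le_rpow_of_exponent_le one_le_two
      have hm0 : (0:ℝ) ≤ (m:ℝ) := Nat.cast_nonneg m
      have hab2 : (0:ℝ) ≤ 2*(α-β) := by linarith
      have h2' : 0 ≤ (m:ℝ) * (2*(α-β)) := mul_nonneg hm0 hab2
      have h3' : (m:ℝ)*(4*α+3) = (m:ℝ) + (m:ℝ)*(2*α+1) + (m:ℝ)*(2*β+1) + (m:ℝ)*(2*(α-β)) := by
        ring
      linarith
    calc 4*E*((5*E*π) ^ (2*α+1))*((5*E*π) ^ (2*β+1))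
        = (4*A*((5*A*π) ^ (2*α+1))*((5*A*π) ^ (2*β+1))) *
          ((2:ℝ)^m * ((2:ℝ)^m) ^ (2*α+1) * ((2:ℝ)^m) ^ (2*β+1)) := by
          rw [hdecomp1, hdecomp2, hEdef]; ring
    _ ≤ (4*A*((5*A*π) ^ (2*α+1))*((5*A*π) ^ (2*β+1))) * 2 ^ ((m:ℝ)*(4*α+3)) := by
          apply mul_le_mul_of_nonneg_left hexp (by positivity)
  -- assemble
  calc (∫ θ in Set.Icc u1 v1, G θ) ≤ M * (2*R) := hupper
  _ ≤ (4*A*((5*A*π) ^ (2*α+1))*((5*A*π) ^ (2*β+1))) * 2 ^ ((m:ℝ)*(4*α+3)) * (cLB * (ρ'/2)) :=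
      hcore
  _ ≤ (4*A*((5*A*π) ^ (2*α+1))*((5*A*π) ^ (2*β+1))) * 2 ^ ((m:ℝ)*(4*α+3)) *
        ∫ θ in Set.Icc u' v', G θ := by
      apply mul_le_mul_of_nonneg_left hlow (by positivity)
end
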